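/- arXiv:1510.03655 — 6 statements merged into one kernel-verified Lean document; each statement's English description precedes it below -/
import Mathlib

section
/- If M is an s×s matrix over F_2 (with s ≥ 2) having at most s−2 entries equal to 0, then M is not invertible. -/
theorem few_zeros_not_invertible (s : ℕ) (hs : 2 ≤ s)
    (M : Matrix (Fin s) (Fin s) (ZMod 2))
    (h : (Finset.univ.filter fun p : Fin s × Fin s => M p.1 p.2 = 0).card ≤ s - 2) :
    ¬ IsUnit M := by
  set Z := (Finset.univ.filter fun p : Fin s × Fin s => M p.1 p.2 = 0) with hZ
  set R : Finset (Fin s) := Z.image Prod.fst with hR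
  have hRcard : R.card ≤ s - 2 := le_trans (Finset.card_image_le) h
  have hcompl : 2 ≤ Rᶜ.card := by
    have : Rᶜ.card = s - R.card := by
      rw [Finset.card_compl, Fintype.card_fin]
    omega
  obtain ⟨i, hi, j, hj, hij⟩ := Finset.one_lt_card.mp (by omega : 1 < Rᶜ.card)
  have hrow : ∀ k : Fin s, k ∈ Rᶜ → M k = fun _ => 1 := by
    intro k hk
    funext c
    have hk' : k ∉ R := Finset.mem_compl.mp hk
    have hne : M k c ≠ 0 := by
      intro h0
      exact hk' (Finset.mem_image.mpr ⟨(k, c), Finset.mem_filter.mpr ⟨Finset.mem_univ _, h0⟩, rfl⟩)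
    have h1 : ∀ x : ZMod 2, x ≠ 0 → x = 1 := by decide
    exact h1 _ hne
  have hdet : M.det = 0 :=
    Matrix.det_zero_of_row_eq hij ((hrow i hi).trans (hrow j hj).symm)
  rw [Matrix.isUnit_iff_isUnit_det, hdet]
  exact not_isUnit_zero
end

section
/- Suppose M is an s×s matrix over F_2 with exactly s−1 entries equal to 0. Then M is invertible over F_2 if and only if the zero entries occur in s−1 distinct rows and s−1 distinct columns (i.e., no two zero entries share a row or a column). -/
open Matrix

private lemma zmod2_ne_zero {x : ZMod 2} (hx : x ≠ 0) : x = 1 := by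
  revert hx; revert x; decide

private lemma aux_row (s : ℕ)
    (M : Matrix (Fin s) (Fin s) (ZMod 2))
    (h : (Finset.univ.filter fun p : Fin s × Fin s => M p.1 p.2 = 0).card = s - 1)
    (i : Fin s) (j j' : Fin s) (hjj : j ≠ j') (hz : M i j = 0) (hz' : M i j' = 0) :
    ¬ IsUnit M := by
  set Z := Finset.univ.filter fun p : Fin s × Fin s => M p.1 p.2 = 0 with hZ
  have hmem : (i, j) ∈ Z := by simp [hZ, hz]
  have hmem' : (i, j') ∈ Z := by simp [hZ, hz']
  set R := Z.image Prod.fst with hR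
  have himg : R = (Z.erase (i, j')).image Prod.fst := by
    apply Finset.Subset.antisymm
    · intro r hr
      simp only [hR, Finset.mem_image] at hr
      obtain ⟨p, hp, hpr⟩ := hr
      by_cases hpij : p = (i, j')
      · subst hpij
        exact Finset.mem_image.2 ⟨(i, j), Finset.mem_erase.2 ⟨by simp [hjj], hmem⟩, hpr⟩
      · exact Finset.mem_image.2 ⟨p, Finset.mem_erase.2 ⟨hpij, hp⟩, hpr⟩
    · exact Finset.image_subset_image (Finset.erase_subset _ _)
  have hcardR : R.card ≤ s - 2 := by
    rw [himg]
    calc ((Z.erase (i, j')).image Prod.fst).card ≤ (Z.erase (i, j')).card :=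
          Finset.card_image_le
      _ = Z.card - 1 := Finset.card_erase_of_mem hmem'
      _ ≤ s - 2 := by omega
  have hs2 : 2 ≤ s := by
    have : 1 ≤ Z.card := Finset.card_pos.2 ⟨_, hmem⟩
    omega
  have hcompl : 2 ≤ (Finset.univ \ R).card := by
    have := Finset.card_sdiff_of_subset (Finset.subset_univ R)
    simp only [Finset.card_univ, Fintype.card_fin] at this
    omega
  obtain ⟨r1, r2, hr1, hr2, hr12⟩ := Finset.one_lt_card_iff.1 hcompl
  have hall : ∀ r, r ∈ Finset.univ \ R → ∀ c, M r c = 1 := by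
    intro r hr c
    apply zmod2_ne_zero
    intro hzero
    have : r ∈ R := Finset.mem_image.2 ⟨(r, c), by simp [hZ, hzero], rfl⟩
    simp [this] at hr
  have heq : M r1 = M r2 := by
    funext c; rw [hall r1 hr1 c, hall r2 hr2 c]
  intro hU
  have := Matrix.det_zero_of_row_eq hr12 heq
  rw [Matrix.isUnit_iff_isUnit_det, this] at hU
  simp at hU

theorem s_minus_one_zeros_invertible_iff (s : ℕ) (hs : 1 ≤ s)
    (M : Matrix (Fin s) (Fin s) (ZMod 2))
    (h : (Finset.univ.filter fun p : Fin s × Fin s => M p.1 p.2 = 0).card = s - 1) :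
    IsUnit M ↔
      ∀ i j i' j', M i j = 0 → M i' j' = 0 → (i, j) ≠ (i', j') → i ≠ i' ∧ j ≠ j' := by
  set Z := Finset.univ.filter fun p : Fin s × Fin s => M p.1 p.2 = 0 with hZ
  have hT : ((Finset.univ.filter fun p : Fin s × Fin s => Mᵀ p.1 p.2 = 0).card = s - 1) := by
    rw [← h]
    apply Finset.card_bij (fun p _ => (p.2, p.1))
    · intro p hp
      have hp2 := (Finset.mem_filter.1 hp).2
      exact Finset.mem_filter.2 ⟨Finset.mem_univ _, hp2⟩
    · intro p _ q _ hpq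
      simp only [Prod.mk.injEq] at hpq
      exact Prod.ext hpq.2 hpq.1
    · intro p hp
      have hp2 := (Finset.mem_filter.1 hp).2
      refine ⟨(p.2, p.1), Finset.mem_filter.2 ⟨Finset.mem_univ _, hp2⟩, rfl⟩
  constructor
  · intro hU i j i' j' hij hij' hne
    constructor
    · intro hii
      subst hii
      have hjj : j ≠ j' := fun hjj => hne (by rw [hjj])
      exact aux_row s M h i j j' hjj hij hij' hU
    · intro hjj
      subst hjj
      have hii : i ≠ i' := fun hii => hne (by rw [hii])
      have := aux_row s Mᵀ hT j i i' hii hij hij'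
      rw [Matrix.isUnit_transpose] at this
      exact this hU
  · intro hdist
    -- injectivity facts
    have hfst : ∀ p ∈ Z, ∀ q ∈ Z, p.1 = q.1 → p = q := by
      intro p hp q hq hpq
      by_contra hne
      simp only [hZ, Finset.mem_filter] at hp hq
      have := (hdist p.1 p.2 q.1 q.2 hp.2 hq.2 (by
        intro hc
        exact hne (by rw [← Prod.mk.eta (p := p), ← Prod.mk.eta (p := q), hc]))).1
      exact this hpq
    have hsnd : ∀ p ∈ Z, ∀ q ∈ Z, p.2 = q.2 → p = q := by
      intro p hp q hq hpq
      by_contra hne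
      simp only [hZ, Finset.mem_filter] at hp hq
      have := (hdist p.1 p.2 q.1 q.2 hp.2 hq.2 (by
        intro hc
        exact hne (by rw [← Prod.mk.eta (p := p), ← Prod.mk.eta (p := q), hc]))).2
      exact this hpq
    set R := Z.image Prod.fst with hR
    set C := Z.image Prod.snd with hC
    have hcardR : R.card = s - 1 := by
      rw [hR, Finset.card_image_of_injOn, h]
      intro p hp q hq hpq; exact hfst p hp q hq hpq
    have hcardC : C.card = s - 1 := by
      rw [hC, Finset.card_image_of_injOn, h]
      intro p hp q hq hpq; exact hsnd p hp q hq hpq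
    -- there is a column with no zero
    have hc0 : ∃ c0 : Fin s, c0 ∉ C := by
      by_contra hcon
      push_neg at hcon
      have : (Finset.univ : Finset (Fin s)) ⊆ C := fun x _ => hcon x
      have := Finset.card_le_card this
      simp [hcardC, Fintype.card_fin] at this
      omega
    obtain ⟨c0, hc0⟩ := hc0
    -- at most one row with no zero
    have hone : ∀ r1 r2 : Fin s, r1 ∉ R → r2 ∉ R → r1 = r2 := by
      intro r1 r2 h1 h2
      have hsub := Finset.card_sdiff_of_subset (Finset.subset_univ R)
      simp only [Finset.card_univ, Fintype.card_fin, hcardR] at hsub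
      have hle : (Finset.univ \ R).card ≤ 1 := by omega
      exact Finset.card_le_one.1 hle r1 (by simp [h1]) r2 (by simp [h2])
    have hnotinZ : ∀ r c, (r, c) ∉ Z → M r c = 1 := by
      intro r c hrc
      apply zmod2_ne_zero
      intro hzero
      exact hrc (by simp [hZ, hzero])
    rw [← Matrix.linearIndependent_rows_iff_isUnit]
    rw [Fintype.linearIndependent_iff]
    intro g hg
    have hgc : ∀ c : Fin s, ∑ i, g i * M i c = 0 := by
      intro c
      have := congrFun hg c
      simpa [Finset.sum_apply] using this
    by_contra hcon
    push_neg at hcon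
    obtain ⟨i0, hi0⟩ := hcon
    have hi0' : g i0 = 1 := zmod2_ne_zero hi0
    -- sum of g is 0
    have hsum0 : ∑ i, g i = 0 := by
      have := hgc c0
      have hM : ∀ i, M i c0 = 1 := by
        intro i
        apply hnotinZ
        intro hmem
        exact hc0 (Finset.mem_image.2 ⟨(i, c0), hmem, rfl⟩)
      simpa [hM] using this
    -- there is another index with g = 1
    have hsum0' : ∑ i ∈ Finset.univ.erase i0, g i = 1 := by
      have h2 := Finset.add_sum_erase Finset.univ g (Finset.mem_univ i0)
      rw [hsum0, hi0'] at h2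
      have := eq_neg_of_add_eq_zero_right h2
      rw [this]; decide
    have hi1 : ∃ i1, g i1 = 1 ∧ i1 ∈ R := by
      by_cases hmem : i0 ∈ R
      · exact ⟨i0, hi0', hmem⟩
      · have : ∃ i1 ∈ Finset.univ.erase i0, g i1 ≠ 0 := by
          by_contra hcon2
          push_neg at hcon2
          have : ∑ i ∈ Finset.univ.erase i0, g i = 0 :=
            Finset.sum_eq_zero hcon2
          rw [this] at hsum0'
          exact one_ne_zero hsum0'.symm
        obtain ⟨i1, hi1m, hi1⟩ := this
        refine ⟨i1, zmod2_ne_zero hi1, ?_⟩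
        by_contra hnot
        exact (Finset.mem_erase.1 hi1m).1 (hone i1 i0 hnot hmem)
      -- now derive contradiction from zero in row i1
    obtain ⟨i1, hgi1, hi1R⟩ := hi1
    obtain ⟨p, hpZ, hp1⟩ := Finset.mem_image.1 hi1R
    obtain ⟨r, c1⟩ := p
    simp only at hp1
    rw [hp1] at hpZ
    have hMc1 : M i1 c1 = 0 := (Finset.mem_filter.1 hpZ).2
    have hMother : ∀ i, i ≠ i1 → M i c1 = 1 := by
      intro i hii1
      apply hnotinZ
      intro hmem
      have := hsnd (i, c1) hmem (i1, c1) hpZ rfl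
      exact hii1 (congrArg Prod.fst this)
    have := hgc c1
    rw [← Finset.add_sum_erase Finset.univ _ (Finset.mem_univ i1)] at this
    rw [hMc1, mul_zero, zero_add] at this
    have heq1 : ∑ i ∈ Finset.univ.erase i1, g i * M i c1
        = ∑ i ∈ Finset.univ.erase i1, g i := by
      apply Finset.sum_congr rfl
      intro i hi
      rw [hMother i (Finset.mem_erase.1 hi).1, mul_one]
    rw [heq1] at this
    have hfin : ∑ i ∈ Finset.univ.erase i1, g i = 1 := by
      have h3 := Finset.add_sum_erase Finset.univ g (Finset.mem_univ i1)
      rw [hsum0, hgi1] at h3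
      have h4 := eq_neg_of_add_eq_zero_right h3
      rw [h4]; decide
    rw [hfin] at this
    exact one_ne_zero this
end

section
/- For all s ≥ 1, the maximum over all invertible s×s matrices M over F_2 of the number of nonzero entries of M equals s² − (s−1). Consequently R_1(s) = 1 − (s−1)/s², where R_1(M) is the fraction of entries of M equal to 1. -/
theorem max_ones_invertible (s : ℕ) (hs : 1 ≤ s) :
    IsGreatest {n : ℕ | ∃ M : Matrix (Fin s) (Fin s) (ZMod 2), IsUnit M ∧
        n = (Finset.univ.filter fun p : Fin s × Fin s => M p.1 p.2 = 1).card}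
      (s ^ 2 - (s - 1)) ∧
    IsGreatest {r : ℚ | ∃ M : Matrix (Fin s) (Fin s) (ZMod 2), IsUnit M ∧
        r = ((Finset.univ.filter fun p : Fin s × Fin s => M p.1 p.2 = 1).card : ℚ) / s ^ 2}
      (1 - ((s : ℚ) - 1) / s ^ 2) := by
  classical
  -- the witness matrix
  set N : Matrix (Fin s) (Fin s) (ZMod 2) :=
    fun i j => if (j : ℕ) = (i : ℕ) + 1 then 0 else 1 with hN
  -- N is a unit
  have hNunit : IsUnit N := by
    rw [← Matrix.mulVec_injective_iff_isUnit]
    intro v w h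
    have hsub : N.mulVec (v - w) = 0 := by
      rw [Matrix.mulVec_sub, h, sub_self]
    set d := v - w with hd
    -- compute mulVec
    have key : ∀ i : Fin s, (∑ j : Fin s, d j) -
        (∑ j : Fin s, if (j : ℕ) = (i : ℕ) + 1 then d j else 0) = 0 := by
      intro i
      have := congrFun hsub i
      rw [Matrix.mulVec, dotProduct] at this
      calc (∑ j : Fin s, d j) - (∑ j : Fin s, if (j : ℕ) = (i : ℕ) + 1 then d j else 0)
          = ∑ j : Fin s, (d j - if (j : ℕ) = (i : ℕ) + 1 then d j else 0) := by
            rw [Finset.sum_sub_distrib]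
        _ = ∑ j, N i j * d j := by
            apply Finset.sum_congr rfl
            intro j _
            by_cases hj : (j : ℕ) = (i : ℕ) + 1 <;> simp [hN, hj]
        _ = 0 := by simpa using this
    have hS : (∑ j : Fin s, d j) = 0 := by
      have hlt : s - 1 < s := by omega
      have := key ⟨s - 1, hlt⟩
      have hempty : (∑ j : Fin s, if (j : ℕ) = (s - 1) + 1 then d j else 0) = 0 := by
        apply Finset.sum_eq_zero
        intro j _
        have : (j : ℕ) < s := j.isLt
        have : (j : ℕ) ≠ (s - 1) + 1 := by omega
        simp [this]
      simpa [hempty] using this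
    have hne : ∀ j : Fin s, (j : ℕ) ≠ 0 → d j = 0 := by
      intro j hj
      have hlt : (j : ℕ) - 1 < s := by omega
      have := key ⟨(j : ℕ) - 1, hlt⟩
      have hsum : (∑ k : Fin s, if (k : ℕ) = ((j : ℕ) - 1) + 1 then d k else 0) = d j := by
        rw [Finset.sum_eq_single j]
        · rw [if_pos (by omega : (j : ℕ) = ((j : ℕ) - 1) + 1)]
        · intro k _ hk
          have : (k : ℕ) ≠ ((j : ℕ) - 1) + 1 := by
            intro h; apply hk; apply Fin.ext; omega
          simp [this]
        · simp
      rw [hS, hsum] at this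
      simpa using this
    have hzero : ∀ j, d j = 0 := by
      intro j
      by_cases hj : (j : ℕ) = 0
      · have h0 : j = ⟨0, by omega⟩ := Fin.ext hj
        have : (∑ k : Fin s, d k) = d j := by
          rw [Finset.sum_eq_single j]
          · intro k _ hk
            apply hne
            intro hk0
            exact hk (Fin.ext (by rw [hk0, hj]))
          · simp
        rw [hS] at this; exact this.symm
      · exact hne j hj
    have : d = 0 := funext hzero
    have := sub_eq_zero.mp (hd ▸ this)
    exact this
  -- the count for N
  have hdiag : (Finset.univ.filter fun p : Fin s × Fin s =>
      ((p.2 : ℕ) = (p.1 : ℕ) + 1)).card = s - 1 := by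
    rw [← Fintype.card_fin (s - 1), ← Finset.card_univ]
    apply Finset.card_bij' (i := fun p _ => (⟨(p.1 : ℕ), by
        have := Finset.mem_filter.mp ‹_› |>.2
        have := p.2.isLt
        omega⟩ : Fin (s - 1)))
      (j := fun i _ => ((⟨(i : ℕ), by have := i.isLt; omega⟩ : Fin s),
        (⟨(i : ℕ) + 1, by have := i.isLt; omega⟩ : Fin s)))
    · intro p hp
      have hp2 := Finset.mem_filter.mp hp |>.2
      ext
      · simp
      · simp [hp2]
    · intro i _; simp
    · intro p hp; simp
    · intro i hi
      simp [Finset.mem_filter]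
  have hNcard : (Finset.univ.filter fun p : Fin s × Fin s => N p.1 p.2 = 1).card
      = s ^ 2 - (s - 1) := by
    have heq : (Finset.univ.filter fun p : Fin s × Fin s => N p.1 p.2 = 1)
        = Finset.univ.filter fun p : Fin s × Fin s => ¬ ((p.2 : ℕ) = (p.1 : ℕ) + 1) := by
      apply Finset.filter_congr
      intro p _
      by_cases hp : (p.2 : ℕ) = (p.1 : ℕ) + 1 <;> simp [hN, hp]
    rw [heq, Finset.filter_not, Finset.card_sdiff_of_subset (Finset.filter_subset _ _), hdiag,
      Finset.card_univ]
    simp [Fintype.card_prod, sq]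
  -- upper bound on the count for any unit M
  have hupper : ∀ M : Matrix (Fin s) (Fin s) (ZMod 2), IsUnit M →
      (Finset.univ.filter fun p : Fin s × Fin s => M p.1 p.2 = 1).card ≤ s ^ 2 - (s - 1) := by
    intro M hM
    set O := Finset.univ.filter fun p : Fin s × Fin s => M p.1 p.2 = 1 with hO
    set Z := Finset.univ.filter fun p : Fin s × Fin s => M p.1 p.2 = 0 with hZ
    have hOZ : O.card + Z.card = s ^ 2 := by
      have := Finset.card_filter_add_card_filter_not
        (s := (Finset.univ : Finset (Fin s × Fin s)))
        (p := fun p => M p.1 p.2 = 1)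
      have hzeq : (Finset.univ.filter fun p : Fin s × Fin s => ¬ M p.1 p.2 = 1) = Z := by
        have hx : ∀ x : ZMod 2, (¬ x = 1) ↔ x = 0 := by decide
        apply Finset.filter_congr
        intro p _
        simp [hx]
      rw [hzeq] at this
      rw [this, Finset.card_univ]
      simp [Fintype.card_prod, sq]
    -- rows are injective
    have hdet : IsUnit M.det := (Matrix.isUnit_iff_isUnit_det M).mp hM
    have hMB : M * M⁻¹ = 1 := Matrix.mul_nonsing_inv M hdet
    have rowinj : Function.Injective (fun i : Fin s => M i) := by
      intro i i' h
      have h1 : (M * M⁻¹) i = (M * M⁻¹) i' := by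
        ext j
        simp only [Matrix.mul_apply]
        apply Finset.sum_congr rfl
        intro k _
        rw [show M i k = M i' k from congrFun h k]
      rw [hMB] at h1
      have := congrFun h1 i
      by_contra hne
      simp [Matrix.one_apply, hne, Ne.symm hne] at this
    -- rows containing a zero
    set A := Finset.univ.filter fun i : Fin s => ∃ j, M i j = 0 with hA
    have hAcard : s - 1 ≤ A.card := by
      have hsplit := Finset.card_filter_add_card_filter_not
        (s := (Finset.univ : Finset (Fin s)))
        (p := fun i => ∃ j, M i j = 0)
      have hcompl : (Finset.univ.filter fun i : Fin s => ¬ ∃ j, M i j = 0).card ≤ 1 := by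
        apply Finset.card_le_one.mpr
        intro i hi i' hi'
        have hi := Finset.mem_filter.mp hi |>.2
        have hi' := Finset.mem_filter.mp hi' |>.2
        push_neg at hi hi'
        apply rowinj
        funext j
        have h1 : M i j = 1 := by
          have := hi j
          revert this
          generalize M i j = x
          revert x; decide
        have h2 : M i' j = 1 := by
          have := hi' j
          revert this
          generalize M i' j = x
          revert x; decide
        show M i j = M i' j
        rw [h1, h2]
      rw [Finset.card_univ, Fintype.card_fin, ← hA] at hsplit
      omega
    have hAZ : A.card ≤ Z.card := by
      apply Finset.card_le_card_of_injOn
        (f := fun i => (i, if h : ∃ j, M i j = 0 then h.choose else (⟨0, by omega⟩ : Fin s)))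
      · intro i hi
        have hi := Finset.mem_filter.mp hi |>.2
        simp only [hi, dif_pos]
        exact Finset.mem_filter.mpr ⟨Finset.mem_univ _, hi.choose_spec⟩
      · intro i _ i' _ h
        exact (Prod.mk.injEq _ _ _ _ ▸ h).1
    omega
  have hupperQ : ∀ r ∈ {r : ℚ | ∃ M : Matrix (Fin s) (Fin s) (ZMod 2), IsUnit M ∧
      r = ((Finset.univ.filter fun p : Fin s × Fin s => M p.1 p.2 = 1).card : ℚ) / s ^ 2},
      r ≤ 1 - ((s : ℚ) - 1) / s ^ 2 := by
    rintro r ⟨M, hM, rfl⟩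
    have hc := hupper M hM
    have hspos : (0 : ℚ) < (s : ℚ) ^ 2 := by positivity
    have htarget : 1 - ((s : ℚ) - 1) / (s : ℚ) ^ 2
        = ((s ^ 2 - (s - 1) : ℕ) : ℚ) / (s : ℚ) ^ 2 := by
      have h1 : (s : ℕ) - 1 ≤ s ^ 2 :=
      le_trans (Nat.sub_le s 1) (Nat.le_self_pow (by norm_num) s)
      rw [Nat.cast_sub h1, Nat.cast_sub hs]
      push_cast
      field_simp
    rw [htarget]
    gcongr
    all_goals exact_mod_cast hc
  constructor
  · constructor
    · exact ⟨N, hNunit, hNcard.symm⟩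
    · rintro n ⟨M, hM, rfl⟩
      exact hupper M hM
  · constructor
    · refine ⟨N, hNunit, ?_⟩
      rw [hNcard]
      have h1 : (s : ℕ) - 1 ≤ s ^ 2 :=
      le_trans (Nat.sub_le s 1) (Nat.le_self_pow (by norm_num) s)
      rw [Nat.cast_sub h1, Nat.cast_sub hs]
      push_cast
      have hspos : (0 : ℚ) < (s : ℚ) ^ 2 := by positivity
      field_simp
    · exact hupperQ
end

section
/- Any 2×s matrix over F_2 contains at most s²/3 invertible 2×2 submatrices; that is, the number of unordered pairs of columns {c, c'} such that the 2×2 matrix formed by columns c and c' is invertible is at most s²/3. -/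
private lemma key_cases (a b c d : ZMod 2) (h : a * d - b * c ≠ 0) :
    ((a, c) = ((1 : ZMod 2), (0 : ZMod 2)) ∨ (a, c) = (0, 1) ∨ (a, c) = (1, 1)) ∧
    ((b, d) = ((1 : ZMod 2), (0 : ZMod 2)) ∨ (b, d) = (0, 1) ∨ (b, d) = (1, 1)) ∧
    (a, c) ≠ (b, d) := by
  revert h; revert a b c d; decide

theorem two_by_s_invertible_pairs_bound (s : ℕ) (N : Matrix (Fin 2) (Fin s) (ZMod 2)) :
    (((Finset.univ.filter fun q : Fin s × Fin s =>
        q.1 < q.2 ∧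
          (!![N 0 q.1, N 0 q.2; N 1 q.1, N 1 q.2]).det ≠ 0).card : ℚ)) ≤ s ^ 2 / 3 := by
  classical
  set f : Fin s → ZMod 2 × ZMod 2 := fun j => (N 0 j, N 1 j) with hf
  set A := Finset.univ.filter (fun j => f j = ((1 : ZMod 2), (0 : ZMod 2))) with hA
  set B := Finset.univ.filter (fun j => f j = ((0 : ZMod 2), (1 : ZMod 2))) with hB
  set C := Finset.univ.filter (fun j => f j = ((1 : ZMod 2), (1 : ZMod 2))) with hC
  set S := Finset.univ.filter (fun q : Fin s × Fin s =>
      q.1 < q.2 ∧ (!![N 0 q.1, N 0 q.2; N 1 q.1, N 1 q.2]).det ≠ 0) with hS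
  set S' := Finset.univ.filter (fun q : Fin s × Fin s =>
      q.2 < q.1 ∧ (!![N 0 q.1, N 0 q.2; N 1 q.1, N 1 q.2]).det ≠ 0) with hS'
  -- every element of S or S' lands in the union of products
  set U := (A ×ˢ B) ∪ (A ×ˢ C) ∪ (B ×ˢ C) ∪ (B ×ˢ A) ∪ (C ×ˢ A) ∪ (C ×ˢ B) with hU
  have memU : ∀ q : Fin s × Fin s,
      (!![N 0 q.1, N 0 q.2; N 1 q.1, N 1 q.2]).det ≠ 0 → q ∈ U := by
    intro q hdet
    rw [Matrix.det_fin_two_of] at hdet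
    obtain ⟨h1, h2, h3⟩ := key_cases (N 0 q.1) (N 0 q.2) (N 1 q.1) (N 1 q.2) hdet
    have h1' : q.1 ∈ A ∨ q.1 ∈ B ∨ q.1 ∈ C := by
      simp only [hA, hB, hC, Finset.mem_filter, Finset.mem_univ, true_and, hf]
      exact h1
    have h2' : q.2 ∈ A ∨ q.2 ∈ B ∨ q.2 ∈ C := by
      simp only [hA, hB, hC, Finset.mem_filter, Finset.mem_univ, true_and, hf]
      exact h2
    simp only [hU, Finset.mem_union, Finset.mem_product]
    have hne : f q.1 ≠ f q.2 := by simpa [hf] using h3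
    have mA : ∀ j, j ∈ A → f j = ((1 : ZMod 2), (0 : ZMod 2)) := by
      intro j hj; simpa [hA] using hj
    have mB : ∀ j, j ∈ B → f j = ((0 : ZMod 2), (1 : ZMod 2)) := by
      intro j hj; simpa [hB] using hj
    have mC : ∀ j, j ∈ C → f j = ((1 : ZMod 2), (1 : ZMod 2)) := by
      intro j hj; simpa [hC] using hj
    rcases h1' with ha | hb | hc <;> rcases h2' with ha' | hb' | hc'
    · exact absurd ((mA _ ha).trans (mA _ ha').symm) hne
    · exact Or.inl (Or.inl (Or.inl (Or.inl (Or.inl ⟨ha, hb'⟩))))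
    · exact Or.inl (Or.inl (Or.inl (Or.inl (Or.inr ⟨ha, hc'⟩))))
    · exact Or.inl (Or.inl (Or.inr ⟨hb, ha'⟩))
    · exact absurd ((mB _ hb).trans (mB _ hb').symm) hne
    · exact Or.inl (Or.inl (Or.inl (Or.inr ⟨hb, hc'⟩)))
    · exact Or.inl (Or.inr ⟨hc, ha'⟩)
    · exact Or.inr ⟨hc, hb'⟩
    · exact absurd ((mC _ hc).trans (mC _ hc').symm) hne
  have hSU : S ⊆ U := by
    intro q hq
    simp only [hS, Finset.mem_filter] at hq
    exact memU q hq.2.2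
  have hS'U : S' ⊆ U := by
    intro q hq
    simp only [hS', Finset.mem_filter] at hq
    exact memU q hq.2.2
  -- handle duplicate-membership separately: need f q.1 ≠ f q.2 to rule out e.g. both in A×A
  -- card S = card S'
  have hcard : S.card = S'.card := by
    apply Finset.card_bij (fun q _ => Prod.swap q)
    · intro q hq
      simp only [hS, Finset.mem_filter, Finset.mem_univ, true_and] at hq
      simp only [hS', Finset.mem_filter, Finset.mem_univ, true_and, Prod.swap]
      refine ⟨hq.1, ?_⟩
      rw [Matrix.det_fin_two_of] at hq ⊢
      intro h
      apply hq.2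
      have : N 0 q.1 * N 1 q.2 - N 0 q.2 * N 1 q.1 = -(N 0 q.2 * N 1 q.1 - N 0 q.1 * N 1 q.2) := by ring
      rw [this, h, neg_zero]
    · intro q1 _ q2 _ h
      exact Prod.swap_injective h
    · intro q hq
      refine ⟨Prod.swap q, ?_, by simp⟩
      simp only [hS', Finset.mem_filter, Finset.mem_univ, true_and] at hq
      simp only [hS, Finset.mem_filter, Finset.mem_univ, true_and, Prod.swap]
      refine ⟨hq.1, ?_⟩
      rw [Matrix.det_fin_two_of] at hq ⊢
      intro h
      apply hq.2
      have : N 0 q.1 * N 1 q.2 - N 0 q.2 * N 1 q.1 = -(N 0 q.2 * N 1 q.1 - N 0 q.1 * N 1 q.2) := by ring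
      rw [this, h, neg_zero]
  have hdisj : Disjoint S S' := by
    rw [Finset.disjoint_left]
    intro q hq hq'
    simp only [hS, Finset.mem_filter] at hq
    simp only [hS', Finset.mem_filter] at hq'
    exact absurd hq'.2.1 (not_lt.mpr hq.2.1.le)
  have hUnion : (S ∪ S').card ≤ U.card :=
    Finset.card_le_card (Finset.union_subset hSU hS'U)
  have hUcard : U.card ≤ 2 * (A.card * B.card + A.card * C.card + B.card * C.card) := by
    calc U.card ≤ A.card * B.card + A.card * C.card + B.card * C.card
        + B.card * A.card + C.card * A.card + C.card * B.card := by
          simp only [hU]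
          refine le_trans (Finset.card_union_le _ _) ?_
          gcongr ?_ + ?_
          · refine le_trans (Finset.card_union_le _ _) ?_
            gcongr ?_ + ?_
            · refine le_trans (Finset.card_union_le _ _) ?_
              gcongr ?_ + ?_
              · refine le_trans (Finset.card_union_le _ _) ?_
                gcongr ?_ + ?_
                · refine le_trans (Finset.card_union_le _ _) ?_
                  gcongr ?_ + ?_ <;> rw [Finset.card_product]
                · rw [Finset.card_product]
              · rw [Finset.card_product]
            · rw [Finset.card_product]
          · rw [Finset.card_product]
      _ = 2 * (A.card * B.card + A.card * C.card + B.card * C.card) := by ring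
  have h2S : 2 * S.card ≤ 2 * (A.card * B.card + A.card * C.card + B.card * C.card) := by
    have := Finset.card_union_of_disjoint hdisj
    omega
  have hSle : S.card ≤ A.card * B.card + A.card * C.card + B.card * C.card := by omega
  have habc : A.card + B.card + C.card ≤ s := by
    have hAB : Disjoint A B := by
      rw [Finset.disjoint_left]; intro j hj hj'
      simp only [hA, hB, Finset.mem_filter, Finset.mem_univ, true_and] at hj hj'
      rw [hj] at hj'; exact absurd hj' (by decide)
    have hABC : Disjoint (A ∪ B) C := by
      rw [Finset.disjoint_left]; intro j hj hj'
      simp only [hA, hB, Finset.mem_union, Finset.mem_filter, Finset.mem_univ, true_and] at hj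
      simp only [hC, Finset.mem_filter, Finset.mem_univ, true_and] at hj'
      rcases hj with h | h <;> rw [h] at hj' <;> exact absurd hj' (by decide)
    have : (A ∪ B ∪ C).card ≤ s := by
      refine le_trans (Finset.card_le_card (Finset.subset_univ _)) ?_
      simp
    rw [Finset.card_union_of_disjoint hABC, Finset.card_union_of_disjoint hAB] at this
    exact this
  -- pass to ℚ
  have hQ1 : (S.card : ℚ) ≤ (A.card : ℚ) * B.card + (A.card : ℚ) * C.card + (B.card : ℚ) * C.card := by
    exact_mod_cast hSle
  have hQ2 : (A.card : ℚ) + B.card + C.card ≤ s := by exact_mod_cast habc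
  rw [le_div_iff₀ (by norm_num : (0:ℚ) < 3)]
  have ha0 : (0:ℚ) ≤ A.card := Nat.cast_nonneg _
  have hb0 : (0:ℚ) ≤ B.card := Nat.cast_nonneg _
  have hc0 : (0:ℚ) ≤ C.card := Nat.cast_nonneg _
  nlinarith [sq_nonneg ((A.card : ℚ) - B.card), sq_nonneg ((A.card : ℚ) - C.card),
    sq_nonneg ((B.card : ℚ) - C.card), sq_nonneg ((A.card : ℚ) + B.card + C.card)]
end

section
/- For any s×s matrix M over F_2 with s ≥ 2, the number N_2(M) of invertible 2×2 submatrices of M satisfies N_2(M) ≤ (2s)/(3(s−1)) · C(s,2)², i.e., the 2-density R_2(M) = N_2(M)/C(s,2)² is at most 2s/(3(s−1)). -/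
open Finset

private lemma zmod2_cases (x : ZMod 2 × ZMod 2) :
    x = (0,0) ∨ x = (0,1) ∨ x = (1,0) ∨ x = (1,1) := by revert x; decide

private lemma pt1 (x y : ZMod 2 × ZMod 2) :
    ((if x ≠ 0 ∧ y ≠ 0 ∧ x ≠ y then (1:ℚ) else 0))
      + ((if x = (0,1) then (1:ℚ) else 0) * (if y = (0,1) then (1:ℚ) else 0)
        + (if x = (1,0) then (1:ℚ) else 0) * (if y = (1,0) then (1:ℚ) else 0)
        + (if x = (1,1) then (1:ℚ) else 0) * (if y = (1,1) then (1:ℚ) else 0))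
    = (if x ≠ 0 then (1:ℚ) else 0) * (if y ≠ 0 then (1:ℚ) else 0) := by
  rcases zmod2_cases x with hx|hx|hx|hx <;> rcases zmod2_cases y with hy|hy|hy|hy <;>
    subst hx <;> subst hy <;> norm_num [Prod.ext_iff]

private lemma pt2 (x : ZMod 2 × ZMod 2) : (if x ≠ 0 then (1:ℚ) else 0)
    = (if x = (0,1) then (1:ℚ) else 0) + (if x = (1,0) then (1:ℚ) else 0)
      + (if x = (1,1) then (1:ℚ) else 0) := by
  rcases zmod2_cases x with hx|hx|hx|hx <;> subst hx <;> norm_num [Prod.ext_iff]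

private lemma key_count {s : ℕ} (f : Fin s → ZMod 2 × ZMod 2) :
    ((univ.filter fun p : Fin s × Fin s =>
        p.1 < p.2 ∧ f p.1 ≠ 0 ∧ f p.2 ≠ 0 ∧ f p.1 ≠ f p.2).card : ℚ) ≤ (s:ℚ)^2/3 := by
  classical
  set e : Fin s → Fin s → ℚ := fun i j => if f i ≠ 0 ∧ f j ≠ 0 ∧ f i ≠ f j then 1 else 0 with he
  set a : ℚ := ∑ i : Fin s, if f i = (0,1) then (1:ℚ) else 0 with ha
  set b : ℚ := ∑ i : Fin s, if f i = (1,0) then (1:ℚ) else 0 with hb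
  set c : ℚ := ∑ i : Fin s, if f i = (1,1) then (1:ℚ) else 0 with hc
  set S : ℚ := ∑ i : Fin s, if f i ≠ 0 then (1:ℚ) else 0 with hS
  have hN : ((univ.filter fun p : Fin s × Fin s =>
        p.1 < p.2 ∧ f p.1 ≠ 0 ∧ f p.2 ≠ 0 ∧ f p.1 ≠ f p.2).card : ℚ)
      = ∑ i : Fin s, ∑ j : Fin s, if i < j then e i j else 0 := by
    rw [Finset.card_filter]
    push_cast
    rw [Fintype.sum_prod_type]
    refine Finset.sum_congr rfl fun i _ => Finset.sum_congr rfl fun j _ => ?_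
    rw [he]
    simp only [ite_and]
  set N : ℚ := ∑ i : Fin s, ∑ j : Fin s, if i < j then e i j else 0 with hNdef
  have hsym : ∀ i j, e i j = e j i := by
    intro i j
    simp only [he]
    refine if_congr ?_ rfl rfl
    constructor <;> rintro ⟨h1, h2, h3⟩ <;> exact ⟨h2, h1, fun h => h3 h.symm⟩
  have hswap : N = ∑ i : Fin s, ∑ j : Fin s, if j < i then e i j else 0 := by
    rw [hNdef, Finset.sum_comm]
    exact Finset.sum_congr rfl fun i _ => Finset.sum_congr rfl fun j _ => by rw [hsym]
  have h2N : 2 * N = ∑ i : Fin s, ∑ j : Fin s, e i j := by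
    have : 2 * N = N + N := by ring
    rw [this]
    nth_rewrite 2 [hswap]
    rw [hNdef, ← Finset.sum_add_distrib]
    refine Finset.sum_congr rfl fun i _ => ?_
    rw [← Finset.sum_add_distrib]
    refine Finset.sum_congr rfl fun j _ => ?_
    rcases lt_trichotomy i j with h|h|h
    · rw [if_pos h, if_neg (asymm h), add_zero]
    · subst h
      simp [he]
    · rw [if_neg (asymm h), if_pos h, zero_add]
  have hE : (∑ i : Fin s, ∑ j : Fin s, e i j) + (a^2 + b^2 + c^2) = S^2 := by
    rw [ha, hb, hc, hS]
    simp only [sq, Finset.sum_mul_sum]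
    rw [← Finset.sum_add_distrib, ← Finset.sum_add_distrib, ← Finset.sum_add_distrib]
    refine Finset.sum_congr rfl fun i _ => ?_
    rw [← Finset.sum_add_distrib, ← Finset.sum_add_distrib, ← Finset.sum_add_distrib]
    exact Finset.sum_congr rfl fun j _ => pt1 (f i) (f j)
  have hSabc : S = a + b + c := by
    rw [hS, ha, hb, hc, ← Finset.sum_add_distrib, ← Finset.sum_add_distrib]
    exact Finset.sum_congr rfl fun i _ => pt2 (f i)
  have hSle : S ≤ (s : ℚ) := by
    rw [hS]
    calc ∑ i : Fin s, (if f i ≠ 0 then (1:ℚ) else 0) ≤ ∑ _i : Fin s, (1:ℚ) :=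
          Finset.sum_le_sum fun i _ => by split <;> norm_num
      _ = s := by simp
  have han : 0 ≤ a := Finset.sum_nonneg fun i _ => by positivity
  have hbn : 0 ≤ b := Finset.sum_nonneg fun i _ => by positivity
  have hcn : 0 ≤ c := Finset.sum_nonneg fun i _ => by positivity
  rw [hN]
  nlinarith [sq_nonneg (a-b), sq_nonneg (a-c), sq_nonneg (b-c), sq_nonneg (a+b+c),
    mul_le_mul hSle hSle (by linarith [hSabc]) (by positivity : (0:ℚ) ≤ (s:ℚ))]

theorem density_upper_bound (s : ℕ) (hs : 2 ≤ s) (M : Matrix (Fin s) (Fin s) (ZMod 2)) :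
    (((Finset.univ.filter fun q : (Fin s × Fin s) × Fin s × Fin s =>
        q.1.1 < q.1.2 ∧ q.2.1 < q.2.2 ∧
          (!![M q.1.1 q.2.1, M q.1.1 q.2.2; M q.1.2 q.2.1, M q.1.2 q.2.2]).det ≠ 0).card : ℚ))
      ≤ (2 * s) / (3 * (s - 1)) * (s.choose 2 : ℚ) ^ 2 := by
  classical
  have hdet : ∀ a b c d : ZMod 2, ((!![a,b;c,d]).det ≠ 0) ↔
      (((a,b) : ZMod 2 × ZMod 2) ≠ 0 ∧ ((c,d) : ZMod 2 × ZMod 2) ≠ 0 ∧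
        ((a,b) : ZMod 2 × ZMod 2) ≠ (c,d)) := by decide
  have hinner : ∀ cp : Fin s × Fin s,
      ((univ.filter fun r : Fin s × Fin s => r.1 < r.2 ∧
        (!![M r.1 cp.1, M r.1 cp.2; M r.2 cp.1, M r.2 cp.2]).det ≠ 0).card : ℚ)
        ≤ (s:ℚ)^2/3 := by
    intro cp
    have h := key_count (fun i => (M i cp.1, M i cp.2))
    refine le_trans (le_of_eq ?_) h
    congr 1
    congr 1
    apply Finset.filter_congr
    intro r _
    rw [hdet]
  have hsplit : (((Finset.univ.filter fun q : (Fin s × Fin s) × Fin s × Fin s =>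
        q.1.1 < q.1.2 ∧ q.2.1 < q.2.2 ∧
          (!![M q.1.1 q.2.1, M q.1.1 q.2.2; M q.1.2 q.2.1, M q.1.2 q.2.2]).det ≠ 0).card : ℚ))
      = ∑ cp : Fin s × Fin s, ∑ r : Fin s × Fin s,
          if r.1 < r.2 ∧ cp.1 < cp.2 ∧
            (!![M r.1 cp.1, M r.1 cp.2; M r.2 cp.1, M r.2 cp.2]).det ≠ 0 then (1:ℚ) else 0 := by
    rw [Finset.card_filter]
    push_cast
    rw [Fintype.sum_prod_type, Finset.sum_comm]
  rw [hsplit]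
  have hcount : ((univ.filter fun cp : Fin s × Fin s => cp.1 < cp.2).card : ℕ) = s.choose 2 := by
    rw [Finset.card_filter, Fintype.sum_prod_type, Finset.sum_comm]
    have : ∀ j : Fin s, (∑ i : Fin s, if i < j then 1 else 0) = (j : ℕ) := by
      intro j
      rw [← Finset.card_filter]
      have : Finset.filter (fun i => i < j) univ = Finset.Iio j := by ext k; simp
      rw [this, Fin.card_Iio]
    rw [Finset.sum_congr rfl fun j _ => this j]
    rw [show (Finset.univ.sum Fin.val) = ∑ i ∈ Finset.range s, i from
      Fin.sum_univ_eq_sum_range (fun i => i) s]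
    rw [Finset.sum_range_id, Nat.choose_two_right]
  have step1 : (∑ cp : Fin s × Fin s, ∑ r : Fin s × Fin s,
          if r.1 < r.2 ∧ cp.1 < cp.2 ∧
            (!![M r.1 cp.1, M r.1 cp.2; M r.2 cp.1, M r.2 cp.2]).det ≠ 0 then (1:ℚ) else 0)
      ≤ ∑ cp : Fin s × Fin s, if cp.1 < cp.2 then (s:ℚ)^2/3 else 0 := by
    refine Finset.sum_le_sum fun cp _ => ?_
    by_cases hc : cp.1 < cp.2
    · rw [if_pos hc]
      have : (∑ r : Fin s × Fin s,
          if r.1 < r.2 ∧ cp.1 < cp.2 ∧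
            (!![M r.1 cp.1, M r.1 cp.2; M r.2 cp.1, M r.2 cp.2]).det ≠ 0 then (1:ℚ) else 0)
          = ((univ.filter fun r : Fin s × Fin s => r.1 < r.2 ∧
            (!![M r.1 cp.1, M r.1 cp.2; M r.2 cp.1, M r.2 cp.2]).det ≠ 0).card : ℚ) := by
        rw [Finset.card_filter]
        push_cast
        exact Finset.sum_congr rfl fun r _ => by simp [hc]
      rw [this]
      exact hinner cp
    · rw [if_neg hc]
      have : ∀ r : Fin s × Fin s, (if r.1 < r.2 ∧ cp.1 < cp.2 ∧
            (!![M r.1 cp.1, M r.1 cp.2; M r.2 cp.1, M r.2 cp.2]).det ≠ 0 then (1:ℚ) else 0) = 0 := by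
        intro r; rw [if_neg]; tauto
      rw [Finset.sum_congr rfl fun r _ => this r]
      simp
  refine le_trans step1 ?_
  rw [Finset.sum_ite, Finset.sum_const, Finset.sum_const_zero, add_zero, nsmul_eq_mul, hcount]
  have h2 : (2:ℚ) ≤ (s:ℚ) := by exact_mod_cast hs
  have hne : (s:ℚ) - 1 ≠ 0 := by linarith
  rw [Nat.cast_choose_two]
  apply le_of_eq
  field_simp
end

section
/- Let M be the v×v incidence matrix (over F_2) of a symmetric (v,k,λ)-BIBD with k odd and λ even. Then the number of invertible 2×2 submatrices of M equals C(v,2)·(k² − λ²), and hence R_2(M) = (k² − λ²)/C(v,2). -/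
lemma two_mul_filter_lt_card {α : Type*} [LinearOrder α]
    (s : Finset (α × α)) (hd : ∀ a, (a, a) ∉ s)
    (hs : ∀ a b, (a, b) ∈ s → (b, a) ∈ s) :
    2 * (s.filter fun p => p.1 < p.2).card = s.card := by
  have hsplit : s = (s.filter fun p => p.1 < p.2) ∪ (s.filter fun p => p.2 < p.1) := by
    ext p
    simp only [Finset.mem_union, Finset.mem_filter]
    constructor
    · intro hp
      rcases lt_trichotomy p.1 p.2 with h|h|h
      · exact Or.inl ⟨hp, h⟩
      · obtain ⟨a, b⟩ := p
        simp only at h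
        subst h
        exact absurd hp (hd a)
      · exact Or.inr ⟨hp, h⟩
    · rintro (⟨h,_⟩|⟨h,_⟩) <;> exact h
  have hdisj : Disjoint (s.filter fun p => p.1 < p.2) (s.filter fun p => p.2 < p.1) := by
    apply Finset.disjoint_filter_filter'
    rw [disjoint_iff_inf_le]
    intro p hp
    exact absurd (lt_trans hp.1 hp.2) (lt_irrefl _)
  have hcard : (s.filter fun p => p.2 < p.1).card = (s.filter fun p => p.1 < p.2).card := by
    apply Finset.card_bij (fun p _ => (p.2, p.1))
    · intro p hp
      simp only [Finset.mem_filter] at hp ⊢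
      exact ⟨hs _ _ hp.1, hp.2⟩
    · intro p hp q hq h
      obtain ⟨a,b⟩ := p; obtain ⟨c,d⟩ := q
      simp only [Prod.mk.injEq] at h
      simp [h.1, h.2]
    · intro p hp
      refine ⟨(p.2, p.1), ?_, rfl⟩
      simp only [Finset.mem_filter] at hp ⊢
      exact ⟨hs _ _ hp.1, hp.2⟩
  calc 2 * (s.filter fun p => p.1 < p.2).card
      = (s.filter fun p => p.1 < p.2).card + (s.filter fun p => p.2 < p.1).card := by
        rw [hcard]; ring
    _ = s.card := by rw [← Finset.card_union_of_disjoint hdisj, ← hsplit]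

lemma two_mul_choose_two (n : ℕ) : 2 * n.choose 2 = n * (n - 1) := by
  have hdvd : 2 ∣ n * (n - 1) := by
    rcases Nat.even_or_odd n with h | h
    · exact Dvd.dvd.mul_right h.two_dvd _
    · rcases n with _ | m
      · simp
      · exact Dvd.dvd.mul_left (Nat.Odd.sub_odd h odd_one).two_dvd _
  rw [Nat.choose_two_right, Nat.mul_div_cancel' hdvd]

set_option maxHeartbeats 1600000 in
lemma key_count_s18 (v k lam : ℕ) (blocks : Fin v → Finset (Fin v))
    (hr : ∀ x : Fin v, (Finset.univ.filter fun j => x ∈ blocks j).card = k)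
    (hlam : ∀ x y : Fin v, x ≠ y →
      (Finset.univ.filter fun j => x ∈ blocks j ∧ y ∈ blocks j).card = lam)
    (M : Matrix (Fin v) (Fin v) (ZMod 2))
    (hM : ∀ i j, M i j = if i ∈ blocks j then 1 else 0)
    (x y : Fin v) (hxy : x ≠ y) :
    2 * (Finset.univ.filter fun q : Fin v × Fin v => q.1 < q.2 ∧
        (!![M x q.1, M x q.2; M y q.1, M y q.2]).det ≠ 0).card + 2 * (lam * lam)
      = 2 * (k * k) := by
  classical
  set S := Finset.univ.filter (fun j => x ∈ blocks j) with hS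
  set T := Finset.univ.filter (fun j => y ∈ blocks j) with hT
  set A := S ×ˢ T with hA
  set B := T ×ˢ S with hB
  set D := (A \ B) ∪ (B \ A) with hD
  have hdet : ∀ j1 j2 : Fin v, ((!![M x j1, M x j2; M y j1, M y j2]).det ≠ 0) ↔
      (((x ∈ blocks j1 ∧ y ∈ blocks j2) ∧ ¬(y ∈ blocks j1 ∧ x ∈ blocks j2)) ∨
       ((y ∈ blocks j1 ∧ x ∈ blocks j2) ∧ ¬(x ∈ blocks j1 ∧ y ∈ blocks j2))) := by
    intro j1 j2
    rw [Matrix.det_fin_two_of, hM, hM, hM, hM]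
    by_cases h1 : x ∈ blocks j1 <;> by_cases h2 : x ∈ blocks j2 <;>
      by_cases h3 : y ∈ blocks j1 <;> by_cases h4 : y ∈ blocks j2 <;>
      simp [h1, h2, h3, h4]
  have hmemD : ∀ q : Fin v × Fin v, q ∈ D ↔
      (((x ∈ blocks q.1 ∧ y ∈ blocks q.2) ∧ ¬(y ∈ blocks q.1 ∧ x ∈ blocks q.2)) ∨
       ((y ∈ blocks q.1 ∧ x ∈ blocks q.2) ∧ ¬(x ∈ blocks q.1 ∧ y ∈ blocks q.2))) := by
    rintro ⟨j1, j2⟩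
    simp only [hD, hA, hB, hS, hT, Finset.mem_union, Finset.mem_sdiff, Finset.mem_product,
      Finset.mem_filter, Finset.mem_univ, true_and]
  have hset : (Finset.univ.filter fun q : Fin v × Fin v => q.1 < q.2 ∧
        (!![M x q.1, M x q.2; M y q.1, M y q.2]).det ≠ 0)
      = D.filter (fun q => q.1 < q.2) := by
    ext q
    simp only [Finset.mem_filter, Finset.mem_univ, true_and, hmemD, hdet]
    tauto
  have hnd : ∀ a : Fin v, (a, a) ∉ D := by
    intro a
    rw [hmemD]
    tauto
  have hsymm : ∀ a b : Fin v, (a, b) ∈ D → (b, a) ∈ D := by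
    intro a b h
    rw [hmemD] at h ⊢
    tauto
  have h2 := two_mul_filter_lt_card D hnd hsymm
  have hAB : A ∩ B = (S ∩ T) ×ˢ (T ∩ S) := by
    ext ⟨j1, j2⟩
    simp only [hA, hB, Finset.mem_inter, Finset.mem_product]
    tauto
  have hST : (S ∩ T).card = lam := by
    have : S ∩ T = Finset.univ.filter (fun j => x ∈ blocks j ∧ y ∈ blocks j) := by
      ext j
      simp only [hS, hT, Finset.mem_inter, Finset.mem_filter, Finset.mem_univ, true_and]
    rw [this, hlam x y hxy]
  have hTS : (T ∩ S).card = lam := by rw [Finset.inter_comm]; exact hST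
  have hABcard : (A ∩ B).card = lam * lam := by
    rw [hAB, Finset.card_product, hST, hTS]
  have hAcard : A.card = k * k := by rw [hA, Finset.card_product, hr, hr]
  have hBcard : B.card = k * k := by rw [hB, Finset.card_product, hr, hr]
  have hBAcard : (B ∩ A).card = lam * lam := by rw [Finset.inter_comm]; exact hABcard
  have h3 : (A \ B).card + lam * lam = k * k := by
    rw [← hABcard, ← hAcard]; exact Finset.card_sdiff_add_card_inter A B
  have h4 : (B \ A).card + lam * lam = k * k := by
    rw [← hBAcard, ← hBcard]; exact Finset.card_sdiff_add_card_inter B A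
  have hDcard : D.card = (A \ B).card + (B \ A).card := by
    rw [hD]
    exact Finset.card_union_of_disjoint disjoint_sdiff_sdiff
  rw [hset, h2, hDcard]
  omega

theorem sbibd_incidence_N2 (v k lam : ℕ) (hv : 2 ≤ v)
    (blocks : Fin v → Finset (Fin v))
    (hk : ∀ j, (blocks j).card = k)
    (hr : ∀ x : Fin v, (Finset.univ.filter fun j => x ∈ blocks j).card = k)
    (hlam : ∀ x y : Fin v, x ≠ y →
      (Finset.univ.filter fun j => x ∈ blocks j ∧ y ∈ blocks j).card = lam)
    (hblam : ∀ j j' : Fin v, j ≠ j' → (blocks j ∩ blocks j').card = lam)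
    (hsym : lam * (v - 1) = k * (k - 1))
    (hko : Odd k) (hle : Even lam)
    (M : Matrix (Fin v) (Fin v) (ZMod 2))
    (hM : ∀ i j, M i j = if i ∈ blocks j then 1 else 0) :
    ((Finset.univ.filter fun q : (Fin v × Fin v) × Fin v × Fin v =>
        q.1.1 < q.1.2 ∧ q.2.1 < q.2.2 ∧
          (!![M q.1.1 q.2.1, M q.1.1 q.2.2; M q.1.2 q.2.1, M q.1.2 q.2.2]).det ≠ 0).card : ℚ)
      = (v.choose 2 : ℚ) * ((k : ℚ) ^ 2 - (lam : ℚ) ^ 2) := by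
  classical
  set c : Fin v × Fin v → ℕ := fun p =>
    (Finset.univ.filter fun q : Fin v × Fin v => q.1 < q.2 ∧
      (!![M p.1 q.1, M p.1 q.2; M p.2 q.1, M p.2 q.2]).det ≠ 0).card with hc
  set P2 := Finset.univ.filter (fun p : Fin v × Fin v => p.1 < p.2) with hP2
  have hsum : (Finset.univ.filter fun q : (Fin v × Fin v) × Fin v × Fin v =>
        q.1.1 < q.1.2 ∧ q.2.1 < q.2.2 ∧
          (!![M q.1.1 q.2.1, M q.1.1 q.2.2; M q.1.2 q.2.1, M q.1.2 q.2.2]).det ≠ 0).card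
      = ∑ p ∈ P2, c p := by
    rw [Finset.card_filter, Fintype.sum_prod_type, hP2, Finset.sum_filter]
    refine Finset.sum_congr rfl fun p _ => ?_
    by_cases hp : p.1 < p.2
    · simp only [hp, true_and, if_true]
      exact (Finset.card_filter _ _).symm
    · simp [hp]
  have hP2card : P2.card = v.choose 2 := by
    have h1 := two_mul_filter_lt_card (Finset.univ.offDiag : Finset ((Fin v) × (Fin v)))
      (fun a => by simp [Finset.mem_offDiag])
      (fun a b h => by simp only [Finset.mem_offDiag, Finset.mem_univ, true_and] at h ⊢; omega)
    have h2 : (Finset.univ.offDiag : Finset ((Fin v) × (Fin v))).filter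
        (fun p => p.1 < p.2) = P2 := by
      ext p
      simp only [Finset.mem_filter, Finset.mem_offDiag, Finset.mem_univ, true_and, hP2]
      constructor
      · rintro ⟨_, h⟩; exact h
      · intro h; exact ⟨ne_of_lt h, h⟩
    have h3 : (Finset.univ.offDiag : Finset ((Fin v) × (Fin v))).card = v * v - v := by
      rw [Finset.offDiag_card]; simp
    have h4 := two_mul_choose_two v
    have h5 : v * (v - 1) = v * v - v := by
      cases v with
      | zero => rfl
      | succ n => rw [Nat.succ_sub_one, Nat.mul_succ, Nat.add_sub_cancel]
    rw [h2, h3] at h1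
    omega
  have hval : ∀ p ∈ P2, (c p : ℚ) = (k : ℚ) ^ 2 - (lam : ℚ) ^ 2 := by
    intro p hp
    have hplt : p.1 < p.2 := by
      rw [hP2] at hp
      exact (Finset.mem_filter.mp hp).2
    have hkey := key_count_s18 v k lam blocks hr hlam M hM p.1 p.2 (ne_of_lt hplt)
    have hq : 2 * (c p : ℚ) + 2 * ((lam : ℚ) * lam) = 2 * ((k : ℚ) * k) := by
      exact_mod_cast hkey
    rw [sq, sq]
    linarith
  rw [hsum]
  push_cast
  rw [Finset.sum_congr rfl hval, Finset.sum_const, hP2card, nsmul_eq_mul]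
end
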